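/- arXiv:2411.06941 — 2 statements merged into one kernel-verified Lean document; each statement's English description precedes it below -/
import Mathlib

section
/- Let G be a finite connected simple graph on n ≥ 1 vertices with at least one edge and let d ≥ 0 be an integer, and suppose χ^d(G) = (λ₁ − λₙ)/(d − λₙ) = m. Then in every d-improper colouring of G with m colours, each colour class induces a d-regular subgraph; moreover there exists an eigenvector u of the adjacency matrix A for the eigenvalue λ₁ with all entries positive such that the partition into colour classes is weight-regular with respect to the weights u_v. -/
open SimpleGraph Finset Matrix

namespace ImproperPaper

variable {V W : Type*}

/-- The strong product of two simple graphs. -/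
def strongProd (G : SimpleGraph V) (H : SimpleGraph W) : SimpleGraph (V × W) where
  Adj p q := (p.1 = q.1 ∧ H.Adj p.2 q.2) ∨ (G.Adj p.1 q.1 ∧ p.2 = q.2) ∨
    (G.Adj p.1 q.1 ∧ H.Adj p.2 q.2)
  symm := by
    refine ⟨?_⟩
    rintro ⟨a, b⟩ ⟨x, y⟩ (⟨h1, h2⟩ | ⟨h1, h2⟩ | ⟨h1, h2⟩)
    · exact Or.inl ⟨h1.symm, h2.symm⟩
    · exact Or.inr (Or.inl ⟨h1.symm, h2.symm⟩)
    · exact Or.inr (Or.inr ⟨h1.symm, h2.symm⟩)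
  loopless := by
    refine ⟨?_⟩
    rintro ⟨a, b⟩ (⟨h1, h2⟩ | ⟨h1, h2⟩ | ⟨h1, h2⟩)
    · exact H.loopless.irrefl b h2
    · exact G.loopless.irrefl a h1
    · exact G.loopless.irrefl a h1

/-- The lexicographical product of two simple graphs. -/
def lexProd (G : SimpleGraph V) (H : SimpleGraph W) : SimpleGraph (V × W) where
  Adj p q := G.Adj p.1 q.1 ∨ (p.1 = q.1 ∧ H.Adj p.2 q.2)
  symm := by
    refine ⟨?_⟩
    rintro ⟨a, b⟩ ⟨x, y⟩ (h | ⟨h1, h2⟩)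
    · exact Or.inl h.symm
    · exact Or.inr ⟨h1.symm, h2.symm⟩
  loopless := by
    refine ⟨?_⟩
    rintro ⟨a, b⟩ (h | ⟨h1, h2⟩)
    · exact G.loopless.irrefl a h
    · exact H.loopless.irrefl b h2

instance {G : SimpleGraph V} {H : SimpleGraph W} [DecidableEq V] [DecidableEq W]
    [DecidableRel G.Adj] [DecidableRel H.Adj] : DecidableRel (strongProd G H).Adj := fun p q =>
  show Decidable ((p.1 = q.1 ∧ H.Adj p.2 q.2) ∨ (G.Adj p.1 q.1 ∧ p.2 = q.2) ∨
    (G.Adj p.1 q.1 ∧ H.Adj p.2 q.2)) from inferInstance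

/-- A colouring is `d`-improper if every colour class induces a subgraph of
maximum degree at most `d`. -/
def IsImproperColoring (G : SimpleGraph V) (d : ℕ) {α : Type*} (c : V → α) : Prop :=
  ∀ v : V, ({w | G.Adj v w ∧ c w = c v} : Set V).ncard ≤ d

/-- The `d`-improper chromatic number. -/
noncomputable def improperChromaticNumber (G : SimpleGraph V) (d : ℕ) : ℕ :=
  sInf {n | ∃ c : V → Fin n, IsImproperColoring G d c}

/-- A colouring is `t`-clustered if every monochromatic connected component has at
most `t` vertices. -/
def IsClusteredColoring (G : SimpleGraph V) (t : ℕ) {α : Type*} (c : V → α) : Prop :=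
  ∀ v : V,
    ({w | Relation.ReflTransGen (fun a b => G.Adj a b ∧ c a = c b) v w} : Set V).ncard ≤ t

/-- The `t`-clustered chromatic number. -/
noncomputable def clusteredChromaticNumber (G : SimpleGraph V) (t : ℕ) : ℕ :=
  sInf {n | ∃ c : V → Fin n, IsClusteredColoring G t c}

/-- The chromatic number: least `n` admitting a proper colouring with `n` colours. -/
noncomputable def chromNum (G : SimpleGraph V) : ℕ :=
  sInf {n | ∃ c : V → Fin n, ∀ u v, G.Adj u v → c u ≠ c v}

/-- The `b`-fold `d`-improper chromatic number: least number of colours in an assignment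
of `b` colours to each vertex such that, for every colour `x`, the set of vertices whose
colour set contains `x` induces a subgraph of maximum degree at most `d`. -/
noncomputable def bFoldImproperChromaticNumber (G : SimpleGraph V) (b d : ℕ) : ℕ :=
  sInf {n | ∃ c : V → Finset (Fin n), (∀ v, (c v).card = b) ∧
    ∀ v : V, ∀ x ∈ c v, ({w | G.Adj v w ∧ x ∈ c w} : Set V).ncard ≤ d}

/-- The (proper) `b`-fold chromatic number. -/
noncomputable def bFoldChromaticNumber (G : SimpleGraph V) (b : ℕ) : ℕ :=
  bFoldImproperChromaticNumber G b 0

/-- The `b`-fold `t`-clustered chromatic number. -/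
noncomputable def bFoldClusteredChromaticNumber (G : SimpleGraph V) (b t : ℕ) : ℕ :=
  sInf {n | ∃ c : V → Finset (Fin n), (∀ v, (c v).card = b) ∧
    ∀ x : Fin n, ∀ v : V, x ∈ c v →
      ({w | Relation.ReflTransGen (fun a b' => G.Adj a b' ∧ x ∈ c a ∧ x ∈ c b') v w} :
        Set V).ncard ≤ t}

/-- The fractional chromatic number `χ_f(G) = inf { χ_b(G)/b : b ≥ 1 }`. -/
noncomputable def fracChromaticNumber (G : SimpleGraph V) : ℝ :=
  sInf {x : ℝ | ∃ b : ℕ, 0 < b ∧ x = (bFoldChromaticNumber G b : ℝ) / b}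

/-- The fractional `d`-improper chromatic number. -/
noncomputable def fracImproperChromaticNumber (G : SimpleGraph V) (d : ℕ) : ℝ :=
  sInf {x : ℝ | ∃ b : ℕ, 0 < b ∧ x = (bFoldImproperChromaticNumber G b d : ℝ) / b}

/-- The fractional `t`-clustered chromatic number. -/
noncomputable def fracClusteredChromaticNumber (G : SimpleGraph V) (t : ℕ) : ℝ :=
  sInf {x : ℝ | ∃ b : ℕ, 0 < b ∧ x = (bFoldClusteredChromaticNumber G b t : ℝ) / b}

/-- `lam` lists the eigenvalues of the Hermitian matrix `A` (with multiplicity) in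
non-increasing order. -/
def IsEigList {n : ℕ} {A : Matrix (Fin n) (Fin n) ℝ} (hA : A.IsHermitian)
    (lam : Fin n → ℝ) : Prop :=
  Antitone lam ∧ ∃ σ : Equiv.Perm (Fin n), lam = hA.eigenvalues ∘ σ

/-- The largest size of a vertex subset inducing a subgraph of maximum degree at most `d`. -/
noncomputable def maxImproperIndep (G : SimpleGraph V) (d : ℕ) : ℕ :=
  sSup {k | ∃ s : Set V, s.ncard = k ∧ ∀ v ∈ s, ({w | w ∈ s ∧ G.Adj v w} : Set V).ncard ≤ d}

end ImproperPaper

/-!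
Let `u > 0` be a Perron eigenvector for `λ₁` (it exists because `G` is connected), let `x_j` be
the restriction of `u` to the colour class `j`, and let `H` be the subgraph of monochromatic edges.
Since `B = A - λₙ • 1` is positive semidefinite,
`∑ i j, (x_i - x_j)ᵀ B (x_i - x_j) = 2 (m ∑ j, x_jᵀ B x_j - uᵀ B u) ≥ 0`, i.e.
`(λ₁ - λₙ) ‖u‖² = uᵀ B u ≤ m ∑ j, x_jᵀ B x_j = m (uᵀ A_H u - λₙ ‖u‖²)`,
while `uᵀ A_H u ≤ ∑ v, deg_H v * u_v² ≤ d ‖u‖²` because the Laplacian of `H` is positive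
semidefinite. This is the bound `λ₁ - λₙ ≤ m (d - λₙ)`; when it is attained, every
inequality is an equality. Hence `deg_H ≡ d`, and all `B x_j` coincide, so that
`A x_j = λₙ x_j + (λ₁ - λₙ) / m • u`; read at a vertex `v`, this says that the weight-intersection
numbers are `b_ij = λₙ δ_ij + (λ₁ - λₙ) / m`.
-/

open scoped ComplexOrder

namespace Matrix

variable {n ι 𝕜 : Type*} [Fintype n]

theorem IsHermitian.sub_smul_one_eq [DecidableEq n] [RCLike 𝕜] {A : Matrix n n 𝕜}
    (hA : A.IsHermitian) (t : ℝ) :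
    A - t • 1 = Unitary.conjStarAlgAut 𝕜 _ hA.eigenvectorUnitary
      (diagonal fun i => ((hA.eigenvalues i - t : ℝ) : 𝕜)) := by
  have hdiag : (diagonal fun i => ((hA.eigenvalues i - t : ℝ) : 𝕜)) =
      diagonal (RCLike.ofReal ∘ hA.eigenvalues) - (t : 𝕜) • 1 := by
    ext i j
    by_cases h : i = j <;> simp [h, diagonal, Algebra.algebraMap_eq_smul_one, sub_smul]
  conv_lhs => rw [hA.spectral_theorem]
  rw [hdiag, map_sub, map_smul, map_one, RCLike.real_smul_eq_coe_smul (K := 𝕜)]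

theorem IsHermitian.posSemidef_sub_smul_one [DecidableEq n] [RCLike 𝕜] {A : Matrix n n 𝕜}
    (hA : A.IsHermitian) {t : ℝ} (ht : ∀ i, t ≤ hA.eigenvalues i) : (A - t • 1).PosSemidef := by
  rw [hA.sub_smul_one_eq, Unitary.conjStarAlgAut_apply,
    Unitary.isUnit_coe.posSemidef_star_right_conjugate_iff, posSemidef_diagonal_iff]
  exact fun i => RCLike.ofReal_nonneg.mpr (sub_nonneg.mpr (ht i))

theorem IsHermitian.posSemidef_smul_one_sub [DecidableEq n] [RCLike 𝕜] {A : Matrix n n 𝕜}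
    (hA : A.IsHermitian) {t : ℝ} (ht : ∀ i, hA.eigenvalues i ≤ t) : (t • 1 - A).PosSemidef := by
  rw [← neg_sub, hA.sub_smul_one_eq, ← map_neg, Unitary.conjStarAlgAut_apply,
    Unitary.isUnit_coe.posSemidef_star_right_conjugate_iff, diagonal_neg, posSemidef_diagonal_iff]
  intro i
  rw [← RCLike.ofReal_neg, RCLike.ofReal_nonneg, neg_sub, sub_nonneg]
  exact ht i

theorem dotProduct_sub_smul_one_mulVec [DecidableEq n] (A : Matrix n n ℝ) (t : ℝ) (y : n → ℝ) :
    y ⬝ᵥ (A - t • 1) *ᵥ y = y ⬝ᵥ A *ᵥ y - t * (y ⬝ᵥ y) := by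
  rw [sub_mulVec, smul_mulVec, one_mulVec, dotProduct_sub, dotProduct_smul, smul_eq_mul]

theorem sum_sum_dotProduct_mulVec_sub {B : Matrix n n ℝ} (hB : B.IsSymm) (s : Finset ι)
    (x : ι → n → ℝ) :
    ∑ i ∈ s, ∑ j ∈ s, (x i - x j) ⬝ᵥ B *ᵥ (x i - x j) =
      2 * (#s * ∑ i ∈ s, x i ⬝ᵥ B *ᵥ x i - (∑ i ∈ s, x i) ⬝ᵥ B *ᵥ ∑ i ∈ s, x i) := by
  have hsymm : ∀ y z : n → ℝ, z ⬝ᵥ B *ᵥ y = y ⬝ᵥ B *ᵥ z := fun y z => by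
    rw [dotProduct_mulVec, ← mulVec_transpose, hB.eq, dotProduct_comm]
  have hexpand : ∀ i j, (x i - x j) ⬝ᵥ B *ᵥ (x i - x j) =
      x i ⬝ᵥ B *ᵥ x i + x j ⬝ᵥ B *ᵥ x j - 2 * (x i ⬝ᵥ B *ᵥ x j) := fun i j => by
    rw [mulVec_sub, sub_dotProduct, dotProduct_sub, dotProduct_sub, hsymm (x i) (x j)]
    ring
  simp only [hexpand, sum_sub_distrib, sum_add_distrib, sum_const, nsmul_eq_mul, ← mul_sum,
    mulVec_sum, dotProduct_sum, sum_dotProduct]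
  rw [sum_comm (s := s) (t := s) (f := fun j i => x i ⬝ᵥ B *ᵥ x j)]
  ring

namespace PosSemidef

variable {B : Matrix n n ℝ}

theorem dotProduct_mulVec_nonneg_of_real (hB : B.PosSemidef) (y : n → ℝ) :
    0 ≤ y ⬝ᵥ B *ᵥ y := by
  simpa only [star_trivial] using hB.dotProduct_mulVec_nonneg y

theorem dotProduct_mulVec_sum_le (hB : B.PosSemidef) (s : Finset ι) (x : ι → n → ℝ) :
    (∑ i ∈ s, x i) ⬝ᵥ B *ᵥ ∑ i ∈ s, x i ≤ #s * ∑ i ∈ s, x i ⬝ᵥ B *ᵥ x i := by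
  have h := sum_sum_dotProduct_mulVec_sub (isHermitian_iff_isSymm.mp hB.isHermitian) s x
  have : 0 ≤ ∑ i ∈ s, ∑ j ∈ s, (x i - x j) ⬝ᵥ B *ᵥ (x i - x j) :=
    sum_nonneg fun i _ => sum_nonneg fun j _ => hB.dotProduct_mulVec_nonneg_of_real _
  linarith

theorem mulVec_eq_of_card_mul_sum_le (hB : B.PosSemidef) {s : Finset ι} {x : ι → n → ℝ}
    (h : #s * ∑ i ∈ s, x i ⬝ᵥ B *ᵥ x i ≤ (∑ i ∈ s, x i) ⬝ᵥ B *ᵥ ∑ i ∈ s, x i) :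
    ∀ i ∈ s, ∀ j ∈ s, B *ᵥ x i = B *ᵥ x j := by
  have hnonneg := hB.dotProduct_mulVec_nonneg_of_real
  have hzero : ∑ i ∈ s, ∑ j ∈ s, (x i - x j) ⬝ᵥ B *ᵥ (x i - x j) = 0 := by
    refine le_antisymm ?_ (sum_nonneg fun i _ => sum_nonneg fun j _ => hnonneg _)
    rw [sum_sum_dotProduct_mulVec_sub (isHermitian_iff_isSymm.mp hB.isHermitian)]
    linarith
  intro i hi j hj
  have hij := (sum_eq_zero_iff_of_nonneg fun j _ => hnonneg (x i - x j)).mp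
    ((sum_eq_zero_iff_of_nonneg fun i _ => sum_nonneg fun j _ => hnonneg _).mp hzero i hi) j hj
  rw [← sub_eq_zero, ← mulVec_sub, ← hB.dotProduct_mulVec_zero_iff, star_trivial]
  exact hij

end PosSemidef

end Matrix

namespace SimpleGraph

variable {V κ : Type*}

section Spectral

variable [Fintype V] {G : SimpleGraph V} [DecidableRel G.Adj]

theorem dotProduct_adjMatrix_mulVec_le_sum_degree [DecidableEq V] (u : V → ℝ) :
    u ⬝ᵥ G.adjMatrix ℝ *ᵥ u ≤ ∑ v, G.degree v * u v * u v := by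
  have hlap := (G.posSemidef_lapMatrix ℝ).dotProduct_mulVec_nonneg_of_real u
  rwa [lapMatrix, sub_mulVec, dotProduct_sub, dotProduct_mulVec_degMatrix, sub_nonneg] at hlap

theorem sum_degree_mul_le {d : ℕ} (hG : ∀ v, G.degree v ≤ d) (u : V → ℝ) :
    ∑ v, G.degree v * u v * u v ≤ d * (u ⬝ᵥ u) := by
  rw [dotProduct, mul_sum]
  refine sum_le_sum fun v _ => ?_
  rw [mul_assoc]
  exact mul_le_mul_of_nonneg_right (by exact_mod_cast hG v) (mul_self_nonneg _)

theorem dotProduct_adjMatrix_mulVec_le_abs (x : V → ℝ) :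
    x ⬝ᵥ G.adjMatrix ℝ *ᵥ x ≤ (fun v => |x v|) ⬝ᵥ G.adjMatrix ℝ *ᵥ fun v => |x v| := by
  simp only [dotProduct_mulVec_adjMatrix, ← abs_mul]
  gcongr with v _ w _
  split_ifs
  exacts [le_abs_self _, le_rfl]

theorem Connected.pos_of_nonneg_of_adjMatrix_mulVec_eq (hconn : G.Connected) {x : V → ℝ} {t : ℝ}
    (hx : ∀ v, 0 ≤ x v) (hx0 : x ≠ 0) (heig : G.adjMatrix ℝ *ᵥ x = t • x) (v : V) : 0 < x v := by
  have hadj : ∀ a b, G.Adj a b → x a = 0 → x b = 0 := fun a b hab ha => by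
    have hsum : ∑ w ∈ G.neighborFinset a, x w = 0 := by
      rw [← adjMatrix_mulVec_apply, heig, Pi.smul_apply, ha, smul_zero]
    exact (sum_eq_zero_iff_of_nonneg fun w _ => hx w).mp hsum b ((mem_neighborFinset G a b).mpr hab)
  have hwalk : ∀ a b (p : G.Walk a b), x a = 0 → x b = 0 := fun a b p => by
    induction p with
    | nil => exact id
    | cons h _ ih => exact fun ha => ih (hadj _ _ h ha)
  refine (hx v).lt_of_ne fun hv => hx0 (funext fun w => ?_)
  obtain ⟨p⟩ := hconn v w
  exact hwalk v w p hv.symm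

/-- Perron–Frobenius for connected graphs: if `x` is an eigenvector for the largest eigenvalue,
then `|x|` is one as well (its Rayleigh quotient can only be larger), and it has no zero entries. -/
theorem Connected.exists_pos_eigenvector [DecidableEq V] (hconn : G.Connected)
    (hA : (G.adjMatrix ℝ).IsHermitian) {t : ℝ} (hmax : ∀ i, hA.eigenvalues i ≤ t)
    (ht : ∃ i, hA.eigenvalues i = t) :
    ∃ u : V → ℝ, (∀ v, 0 < u v) ∧ G.adjMatrix ℝ *ᵥ u = t • u := by
  obtain ⟨i, rfl⟩ := ht
  set x : V → ℝ := ⇑(hA.eigenvectorBasis i)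
  have hx : G.adjMatrix ℝ *ᵥ x = hA.eigenvalues i • x := hA.mulVec_eigenvectorBasis i
  have hx0 : x ≠ 0 := fun h =>
    hA.eigenvectorBasis.orthonormal.ne_zero i (by ext v; exact congrFun h v)
  set y : V → ℝ := fun v => |x v|
  set B := hA.eigenvalues i • (1 : Matrix V V ℝ) - G.adjMatrix ℝ
  have hB : B.PosSemidef := hA.posSemidef_smul_one_sub hmax
  have hyy : y ⬝ᵥ y = x ⬝ᵥ x := by simp [y, dotProduct, ← sq]
  have hqy : y ⬝ᵥ B *ᵥ y = 0 := by
    refine le_antisymm ?_ (hB.dotProduct_mulVec_nonneg_of_real y)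
    have := dotProduct_adjMatrix_mulVec_le_abs (G := G) x
    simp only [B, sub_mulVec, smul_mulVec, one_mulVec, dotProduct_sub, dotProduct_smul, smul_eq_mul]
    rw [hyy, ← smul_eq_mul, ← dotProduct_smul, ← hx]
    linarith
  have hy : G.adjMatrix ℝ *ᵥ y = hA.eigenvalues i • y := by
    have := (hB.dotProduct_mulVec_zero_iff y).mp (by rwa [star_trivial])
    rwa [sub_mulVec, smul_mulVec, one_mulVec, sub_eq_zero, eq_comm] at this
  have hy0 : y ≠ 0 := fun h => hx0 (funext fun v => abs_eq_zero.mp (congrFun h v))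
  exact ⟨y, hconn.pos_of_nonneg_of_adjMatrix_mulVec_eq (fun v => abs_nonneg _) hy0 hy, hy⟩

end Spectral

def monochromaticSubgraph (G : SimpleGraph V) (c : V → κ) : SimpleGraph V where
  Adj v w := G.Adj v w ∧ c w = c v
  symm := ⟨fun _ _ h => ⟨h.1.symm, h.2.symm⟩⟩
  loopless := ⟨fun v h => G.loopless.irrefl v h.1⟩

variable [DecidableEq κ]

instance (G : SimpleGraph V) [DecidableRel G.Adj] (c : V → κ) :
    DecidableRel (G.monochromaticSubgraph c).Adj :=
  fun _ _ => inferInstanceAs (Decidable (_ ∧ _))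

def restrictToColor (c : V → κ) (u : V → ℝ) (j : κ) : V → ℝ := fun v => if c v = j then u v else 0

theorem sum_restrictToColor [Fintype κ] (c : V → κ) (u : V → ℝ) :
    ∑ j, restrictToColor c u j = u := by
  ext v; simp [restrictToColor]

section Coloring

variable [Fintype V] {G : SimpleGraph V} [DecidableRel G.Adj]

noncomputable def weightIntersection (G : SimpleGraph V) [DecidableRel G.Adj] (c : V → κ)
    (u : V → ℝ) (v : V) (j : κ) : ℝ :=
  (1 / u v) * ∑ w ∈ univ.filter fun w => G.Adj v w ∧ c w = j, u w

theorem neighborFinset_monochromaticSubgraph (c : V → κ) (v : V) :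
    (G.monochromaticSubgraph c).neighborFinset v = univ.filter fun w => G.Adj v w ∧ c w = c v := by
  ext w
  simp only [mem_neighborFinset, mem_filter, mem_univ, true_and]
  rfl

theorem ncard_setOf_eq_degree_monochromaticSubgraph (c : V → κ) (v : V) :
    ({w | G.Adj v w ∧ c w = c v} : Set V).ncard = (G.monochromaticSubgraph c).degree v := by
  rw [← card_neighborFinset_eq_degree, neighborFinset_monochromaticSubgraph,
    Set.ncard_eq_toFinset_card', Set.toFinset_ofPred]

theorem adjMatrix_mulVec_restrictToColor_apply (c : V → κ) (u : V → ℝ) (j : κ) (v : V) :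
    (G.adjMatrix ℝ *ᵥ restrictToColor c u j) v =
      ∑ w ∈ univ.filter fun w => G.Adj v w ∧ c w = j, u w := by
  simp [neighborFinset_eq_filter, restrictToColor, sum_filter, ite_and]

variable [Fintype κ]

theorem sum_dotProduct_restrictToColor_self (c : V → κ) (u : V → ℝ) :
    ∑ j, restrictToColor c u j ⬝ᵥ restrictToColor c u j = u ⬝ᵥ u := by
  simp only [dotProduct, restrictToColor, mul_ite, ite_mul, mul_zero, zero_mul]
  rw [sum_comm]
  simp

theorem sum_dotProduct_adjMatrix_mulVec_restrictToColor (c : V → κ) (u : V → ℝ) :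
    ∑ j, restrictToColor c u j ⬝ᵥ G.adjMatrix ℝ *ᵥ restrictToColor c u j =
      u ⬝ᵥ (G.monochromaticSubgraph c).adjMatrix ℝ *ᵥ u := by
  simp only [dotProduct, adjMatrix_mulVec_restrictToColor_apply]
  rw [sum_comm]
  simp [restrictToColor, ite_mul, neighborFinset_monochromaticSubgraph]

end Coloring

section Hoffman

variable [Fintype V] [DecidableEq V] {G : SimpleGraph V} [DecidableRel G.Adj]

variable {c : V → κ} {d : ℕ}

theorem dotProduct_adjMatrix_monochromaticSubgraph_mulVec_le
    (hc : ∀ v, (G.monochromaticSubgraph c).degree v ≤ d) (u : V → ℝ) :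
    u ⬝ᵥ (G.monochromaticSubgraph c).adjMatrix ℝ *ᵥ u ≤ d * (u ⬝ᵥ u) :=
  (dotProduct_adjMatrix_mulVec_le_sum_degree u).trans (sum_degree_mul_le hc u)

variable [Fintype κ] (hA : (G.adjMatrix ℝ).IsHermitian) {t₁ t₂ : ℝ} {u : V → ℝ}

theorem le_dotProduct_adjMatrix_monochromaticSubgraph_mulVec [Nonempty κ]
    (hmin : ∀ i, t₂ ≤ hA.eigenvalues i) (hu : G.adjMatrix ℝ *ᵥ u = t₁ • u)
    (hm : (Fintype.card κ : ℝ) * (d - t₂) = t₁ - t₂) :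
    d * (u ⬝ᵥ u) ≤ u ⬝ᵥ (G.monochromaticSubgraph c).adjMatrix ℝ *ᵥ u := by
  have hsum := (hA.posSemidef_sub_smul_one hmin).dotProduct_mulVec_sum_le univ
    (restrictToColor c u)
  simp only [sum_restrictToColor, card_univ, dotProduct_sub_smul_one_mulVec, sum_sub_distrib,
    ← mul_sum, sum_dotProduct_adjMatrix_mulVec_restrictToColor,
    sum_dotProduct_restrictToColor_self, hu, dotProduct_smul, smul_eq_mul] at hsum
  refine le_of_mul_le_mul_left ?_ (Nat.cast_pos.mpr (Fintype.card_pos (α := κ)))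
  linear_combination hsum + (u ⬝ᵥ u) * hm

theorem degree_monochromaticSubgraph_eq (hmin : ∀ i, t₂ ≤ hA.eigenvalues i)
    (hu : G.adjMatrix ℝ *ᵥ u = t₁ • u) (hupos : ∀ v, 0 < u v)
    (hc : ∀ v, (G.monochromaticSubgraph c).degree v ≤ d)
    (hm : (Fintype.card κ : ℝ) * (d - t₂) = t₁ - t₂) (v : V) :
    (G.monochromaticSubgraph c).degree v = d := by
  have : Nonempty κ := ⟨c v⟩
  have hsum : ∑ v, ((G.monochromaticSubgraph c).degree v : ℝ) * u v * u v =
      ∑ v, (d : ℝ) * u v * u v := by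
    rw [show ∑ v, (d : ℝ) * u v * u v = d * (u ⬝ᵥ u) by simp only [dotProduct, mul_sum, mul_assoc]]
    refine le_antisymm (sum_degree_mul_le hc u) ?_
    exact (le_dotProduct_adjMatrix_monochromaticSubgraph_mulVec hA hmin hu hm).trans
      (dotProduct_adjMatrix_mulVec_le_sum_degree u)
  have hle : ∀ v ∈ univ, ((G.monochromaticSubgraph c).degree v : ℝ) * u v * u v ≤ d * u v * u v :=
    fun v _ => mul_le_mul_of_nonneg_right
      (mul_le_mul_of_nonneg_right (by exact_mod_cast hc v) (hupos v).le) (hupos v).le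
  have := (sum_eq_sum_iff_of_le hle).mp hsum v (mem_univ v)
  exact_mod_cast mul_right_cancel₀ (hupos v).ne' (mul_right_cancel₀ (hupos v).ne' this)

theorem card_smul_adjMatrix_mulVec_restrictToColor (hmin : ∀ i, t₂ ≤ hA.eigenvalues i)
    (hu : G.adjMatrix ℝ *ᵥ u = t₁ • u) (hc : ∀ v, (G.monochromaticSubgraph c).degree v ≤ d)
    (hm : (Fintype.card κ : ℝ) * (d - t₂) = t₁ - t₂) (j : κ) :
    (Fintype.card κ : ℝ) • G.adjMatrix ℝ *ᵥ restrictToColor c u j =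
      (Fintype.card κ * t₂) • restrictToColor c u j + (t₁ - t₂) • u := by
  set B := G.adjMatrix ℝ - t₂ • 1
  have hB : B.PosSemidef := hA.posSemidef_sub_smul_one hmin
  have htight : #(univ : Finset κ) * ∑ i, restrictToColor c u i ⬝ᵥ B *ᵥ restrictToColor c u i ≤
      (∑ i, restrictToColor c u i) ⬝ᵥ B *ᵥ ∑ i, restrictToColor c u i := by
    have := dotProduct_adjMatrix_monochromaticSubgraph_mulVec_le hc u
    simp only [B, sum_restrictToColor, card_univ, dotProduct_sub_smul_one_mulVec,
      sum_sub_distrib, ← mul_sum, sum_dotProduct_adjMatrix_mulVec_restrictToColor,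
      sum_dotProduct_restrictToColor_self, hu, dotProduct_smul, smul_eq_mul]
    linear_combination (Fintype.card κ : ℝ) * this + (u ⬝ᵥ u) * hm
  have hall := hB.mulVec_eq_of_card_mul_sum_le htight
  have hBu : (Fintype.card κ : ℝ) • B *ᵥ restrictToColor c u j = (t₁ - t₂) • u := by
    rw [Nat.cast_smul_eq_nsmul, ← card_univ, ← sum_const]
    rw [sum_congr rfl fun i _ => hall j (mem_univ _) i (mem_univ _), ← mulVec_sum,
      sum_restrictToColor]
    simp only [B, sub_mulVec, smul_mulVec, one_mulVec, hu, sub_smul]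
  simp only [B, sub_mulVec, smul_mulVec, one_mulVec, smul_sub, smul_smul] at hBu
  rw [← sub_eq_iff_eq_add', hBu]

theorem weightIntersection_eq (hmin : ∀ i, t₂ ≤ hA.eigenvalues i)
    (hu : G.adjMatrix ℝ *ᵥ u = t₁ • u) (hupos : ∀ v, 0 < u v)
    (hc : ∀ v, (G.monochromaticSubgraph c).degree v ≤ d)
    (hm : (Fintype.card κ : ℝ) * (d - t₂) = t₁ - t₂) (v : V) (j : κ) :
    weightIntersection G c u v j = (if c v = j then t₂ else 0) + (t₁ - t₂) / Fintype.card κ := by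
  have hv := congrFun (card_smul_adjMatrix_mulVec_restrictToColor hA hmin hu hc hm j) v
  simp only [Pi.smul_apply, Pi.add_apply, smul_eq_mul, adjMatrix_mulVec_restrictToColor_apply]
    at hv
  have : Nonempty κ := ⟨c v⟩
  have hcard : (Fintype.card κ : ℝ) ≠ 0 := Nat.cast_ne_zero.mpr Fintype.card_ne_zero
  rw [weightIntersection, one_div, inv_mul_eq_iff_eq_mul₀ (hupos v).ne']
  apply mul_left_cancel₀ hcard
  rw [hv, restrictToColor]
  split_ifs
  · field_simp
  · field_simp
    ring

end Hoffman

end SimpleGraph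

namespace ImproperPaper

variable {n : ℕ} {A : Matrix (Fin n) (Fin n) ℝ} {hA : A.IsHermitian} {lam : Fin n → ℝ}

theorem IsEigList.eigenvalues_le_head (h : IsEigList hA lam) (hn : 0 < n) (i : Fin n) :
    hA.eigenvalues i ≤ lam ⟨0, hn⟩ := by
  obtain ⟨hanti, σ, rfl⟩ := h
  simpa using hanti (show ⟨0, hn⟩ ≤ σ.symm i from Nat.zero_le _)

theorem IsEigList.last_le_eigenvalues (h : IsEigList hA lam) (hn : n - 1 < n) (i : Fin n) :
    lam ⟨n - 1, hn⟩ ≤ hA.eigenvalues i := by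
  obtain ⟨hanti, σ, rfl⟩ := h
  simpa using hanti (show σ.symm i ≤ ⟨n - 1, hn⟩ from Nat.le_sub_one_of_lt (σ.symm i).isLt)

theorem IsEigList.exists_eigenvalues_eq (h : IsEigList hA lam) (k : Fin n) :
    ∃ i, hA.eigenvalues i = lam k := by
  obtain ⟨-, σ, rfl⟩ := h
  exact ⟨σ k, rfl⟩

end ImproperPaper

open ImproperPaper in
theorem stmt_2 {n : ℕ} (hn : 1 ≤ n) (G : SimpleGraph (Fin n)) [DecidableRel G.Adj]
    (hconn : G.Connected) (d m : ℕ)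
    (hA : (G.adjMatrix ℝ).IsHermitian) (lam : Fin n → ℝ) (hlam : IsEigList hA lam)
    (heq : (m : ℝ) =
      (lam ⟨0, by omega⟩ - lam ⟨n - 1, by omega⟩) / ((d : ℝ) - lam ⟨n - 1, by omega⟩)) :
    ∀ c : Fin n → Fin m, IsImproperColoring G d c →
      (∀ v : Fin n, ({w | G.Adj v w ∧ c w = c v} : Set (Fin n)).ncard = d) ∧
      ∃ u : Fin n → ℝ, (∀ v, 0 < u v) ∧
        G.adjMatrix ℝ *ᵥ u = lam ⟨0, by omega⟩ • u ∧
        ∀ (i j : Fin m), ∀ v w : Fin n, c v = i → c w = i →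
          (1 / u v) * ∑ w' ∈ Finset.univ.filter (fun w' => G.Adj v w' ∧ c w' = j), u w' =
          (1 / u w) * ∑ w' ∈ Finset.univ.filter (fun w' => G.Adj w w' ∧ c w' = j), u w' := by
  intro c hc
  have hmin := hlam.last_le_eigenvalues (by omega)
  obtain ⟨u, hupos, hu⟩ := hconn.exists_pos_eigenvector hA (hlam.eigenvalues_le_head hn)
    (hlam.exists_eigenvalues_eq _)
  have hdeg (v : Fin n) : (G.monochromaticSubgraph c).degree v ≤ d :=
    ncard_setOf_eq_degree_monochromaticSubgraph (G := G) c v ▸ hc v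
  have hm : (Fintype.card (Fin m) : ℝ) * (d - lam ⟨n - 1, by omega⟩) =
      lam ⟨0, hn⟩ - lam ⟨n - 1, by omega⟩ := by
    have hm0 : (m : ℝ) ≠ 0 := Nat.cast_ne_zero.mpr (c ⟨0, hn⟩).pos.ne'
    have hd : (d : ℝ) - lam ⟨n - 1, by omega⟩ ≠ 0 := fun h => hm0 (by rw [heq, h, div_zero])
    rw [Fintype.card_fin, heq, div_mul_cancel₀ _ hd]
  refine ⟨fun v => ?_, u, hupos, hu, fun i j v w hv hw => ?_⟩
  · rw [ncard_setOf_eq_degree_monochromaticSubgraph (G := G)]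
    exact degree_monochromaticSubgraph_eq hA hmin hu hupos hdeg hm v
  · change weightIntersection G c u v j = weightIntersection G c u w j
    rw [weightIntersection_eq hA hmin hu hupos hdeg hm,
      weightIntersection_eq hA hmin hu hupos hdeg hm, hv, hw]
end

section
/- Let G be a finite simple graph on n vertices, let d ≥ 0 be an integer, and let A be a real symmetric n × n matrix indexed by V(G) such that |A_{u,v}| ≤ 1 for all u, v and A_{u,v} = 0 whenever u and v are not adjacent in G. Then α^d(G) ≤ min{ n − n_d^+(A), n − n_d^-(A) }, where n_d^+(A) is the number of eigenvalues of A strictly greater than d and n_d^-(A) is the number of eigenvalues of A strictly less than −d (counted with multiplicity). -/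
open SimpleGraph Finset Matrix

/-
Let `s` induce a subgraph of maximum degree at most `d` and let `x` be supported on `s`. Since
`|A u v| ≤ 1` and `A` vanishes off the edges, every row of `A` restricted to `s` has absolute sum
at most `d`, so `|xᵀ A x| ≤ d ‖x‖²`. On the span of the eigenvectors of `A` with eigenvalue
`> d`, however, `xᵀ A x > d ‖x‖²` for `x ≠ 0`. The two subspaces therefore meet only in `0`, so
their dimensions `|s|` and `n_d^+(A)` add up to at most `n`. Applying this to `-A` bounds `|s|`
by `n - n_d^-(A)`.
-/

open Module Submodule
open scoped InnerProductSpace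

theorem Finset.abs_sum_sum_mul_le_of_rowSum_le {ι : Type*} (s : Finset ι) {B : Matrix ι ι ℝ}
    (hB : B.IsSymm) {c : ℝ} (hrow : ∀ u ∈ s, ∑ v ∈ s, |B u v| ≤ c) (x : ι → ℝ) :
    |∑ u ∈ s, ∑ v ∈ s, x u * B u v * x v| ≤ c * ∑ u ∈ s, x u ^ 2 := by
  have hterm (u v : ι) :
      |x u * B u v * x v| ≤ |B u v| * x u ^ 2 / 2 + |B u v| * x v ^ 2 / 2 := by
    have hamgm : 2 * |x u| * |x v| ≤ x u ^ 2 + x v ^ 2 := by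
      simpa only [sq_abs] using two_mul_le_add_sq |x u| |x v|
    rw [abs_mul, abs_mul]
    nlinarith [abs_nonneg (B u v)]
  have hswap :
      ∑ u ∈ s, ∑ v ∈ s, |B u v| * x v ^ 2 / 2 = ∑ u ∈ s, ∑ v ∈ s, |B u v| * x u ^ 2 / 2 := by
    rw [sum_comm]
    simp_rw [hB.apply]
  calc |∑ u ∈ s, ∑ v ∈ s, x u * B u v * x v|
      ≤ ∑ u ∈ s, ∑ v ∈ s, (|B u v| * x u ^ 2 / 2 + |B u v| * x v ^ 2 / 2) :=
        (abs_sum_le_sum_abs _ _).trans <| sum_le_sum fun u _ =>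
          (abs_sum_le_sum_abs _ _).trans <| sum_le_sum fun v _ => hterm u v
    _ = ∑ u ∈ s, (∑ v ∈ s, |B u v|) * x u ^ 2 := by
        simp_rw [sum_add_distrib, hswap, ← sum_add_distrib, sum_mul]
        ring_nf
    _ ≤ ∑ u ∈ s, c * x u ^ 2 := sum_le_sum fun u hu => by gcongr; exact hrow u hu
    _ = c * ∑ u ∈ s, x u ^ 2 := (mul_sum _ _ _).symm

section

variable {ι E : Type*} [Fintype ι] [NormedAddCommGroup E] [InnerProductSpace ℝ E]

theorem OrthonormalBasis.inner_eq_zero_of_mem_span_image (b : OrthonormalBasis ι ℝ E) {S : Set ι}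
    {x : E} (hx : x ∈ span ℝ (b '' S)) {i : ι} (hi : i ∉ S) : ⟪b i, x⟫_ℝ = 0 := by
  suffices span ℝ (b '' S) ≤ (ℝ ∙ b i)ᗮ from mem_orthogonal_singleton_iff_inner_right.mp (this hx)
  rw [span_le]
  rintro _ ⟨j, hj, rfl⟩
  exact mem_orthogonal_singleton_iff_inner_right.mpr <|
    b.orthonormal.inner_eq_zero fun h => hi (h ▸ hj)

theorem OrthonormalBasis.inner_apply_self_eq_sum (b : OrthonormalBasis ι ℝ E) {T : E →ₗ[ℝ] E}
    (hT : T.IsSymmetric) {μ : ι → ℝ} (hb : ∀ i, T (b i) = μ i • b i) (x : E) :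
    ⟪x, T x⟫_ℝ = ∑ i, μ i * ⟪b i, x⟫_ℝ ^ 2 := by
  rw [← b.sum_inner_mul_inner]
  refine sum_congr rfl fun i _ => ?_
  rw [← hT, hb, real_inner_smul_left, real_inner_comm]
  ring

theorem OrthonormalBasis.mul_norm_sq_lt_inner_apply_self (b : OrthonormalBasis ι ℝ E)
    {T : E →ₗ[ℝ] E} (hT : T.IsSymmetric) {μ : ι → ℝ} (hb : ∀ i, T (b i) = μ i • b i)
    {S : Set ι} {c : ℝ} (hS : ∀ i ∈ S, c < μ i) {x : E} (hx : x ∈ span ℝ (b '' S)) (hx0 : x ≠ 0) :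
    c * ‖x‖ ^ 2 < ⟪x, T x⟫_ℝ := by
  obtain ⟨i₀, hi₀⟩ : ∃ i, ⟪b i, x⟫_ℝ ≠ 0 := by
    by_contra! h
    exact hx0 (by simpa [h] using (b.sum_repr' x).symm)
  have hmem : ∀ i, ⟪b i, x⟫_ℝ ≠ 0 → i ∈ S := fun i hi =>
    by_contra fun hiS => hi (b.inner_eq_zero_of_mem_span_image hx hiS)
  rw [b.inner_apply_self_eq_sum hT hb, ← b.sum_sq_norm_inner_right, mul_sum]
  refine sum_lt_sum (fun i _ => ?_) ⟨i₀, mem_univ _, ?_⟩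
  · rcases eq_or_ne ⟪b i, x⟫_ℝ 0 with h | h
    · simp [h]
    · rw [Real.norm_eq_abs, sq_abs]
      exact mul_le_mul_of_nonneg_right (hS i (hmem i h)).le (sq_nonneg _)
  · rw [Real.norm_eq_abs, sq_abs]
    exact mul_lt_mul_of_pos_right (hS i₀ (hmem i₀ hi₀)) (by positivity)

theorem LinearIndependent.finrank_span_image {K M : Type*} [DivisionRing K]
    [AddCommGroup M] [Module K M] {b : ι → M} (hb : LinearIndependent K b) (S : Set ι) :
    finrank K (span K (b '' S)) = S.ncard := by
  classical
  rw [Set.image_eq_range, finrank_span_eq_card (b := fun i : S => b i)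
    (hb.comp _ Subtype.val_injective), Set.ncard_eq_toFinset_card', Set.toFinset_card]

end

section

variable {V : Type*} [Fintype V]

theorem Matrix.inner_toEuclideanLin_self_eq_sum_sum [DecidableEq V] (A : Matrix V V ℝ)
    {s : Finset V} {x : EuclideanSpace ℝ V} (hx : ∀ v ∉ s, x v = 0) :
    ⟪x, toEuclideanLin A x⟫_ℝ = ∑ u ∈ s, ∑ v ∈ s, x u * A u v * x v := by
  have hrow : ∀ u, ∑ v ∈ s, x u * A u v * x v = ∑ v, x u * A u v * x v := fun u =>
    sum_subset (subset_univ s) fun v _ hv => by simp [hx v hv]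
  rw [sum_subset (subset_univ s) fun u _ hu => by simp [hx u hu]]
  simp only [hrow, EuclideanSpace.inner_eq_star_dotProduct, star_trivial, dotProduct, ofLp_toLpLin,
    toLin'_apply, mulVec, sum_mul]
  exact sum_congr rfl fun u _ => sum_congr rfl fun v _ => by ring

theorem EuclideanSpace.real_norm_sq_eq_sum_of_support {s : Finset V} {x : EuclideanSpace ℝ V}
    (hx : ∀ v ∉ s, x v = 0) : ‖x‖ ^ 2 = ∑ u ∈ s, x u ^ 2 := by
  rw [EuclideanSpace.real_norm_sq_eq]
  exact (sum_subset (subset_univ s) fun u _ hu => by simp [hx u hu]).symm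

theorem abs_inner_toEuclideanLin_self_le_of_induced_degree_le [DecidableEq V] {G : SimpleGraph V}
    [DecidableRel G.Adj] {d : ℕ} {A : Matrix V V ℝ} (hA : A.IsHermitian) (hbd : ∀ u v, |A u v| ≤ 1)
    (hz : ∀ u v, ¬ G.Adj u v → A u v = 0) {s : Finset V} (hs : ∀ v ∈ s, #{w ∈ s | G.Adj v w} ≤ d)
    {x : EuclideanSpace ℝ V} (hx : ∀ v ∉ s, x v = 0) :
    |⟪x, toEuclideanLin A x⟫_ℝ| ≤ d * ‖x‖ ^ 2 := by
  rw [Matrix.inner_toEuclideanLin_self_eq_sum_sum A hx,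
    EuclideanSpace.real_norm_sq_eq_sum_of_support hx]
  refine s.abs_sum_sum_mul_le_of_rowSum_le (isHermitian_iff_isSymm.mp hA) (fun u hu => ?_) _
  calc ∑ v ∈ s, |A u v| ≤ ∑ v ∈ s, if G.Adj u v then 1 else 0 := sum_le_sum fun v _ => by
        split_ifs with h
        · exact hbd u v
        · simp [hz u v h]
    _ = #{w ∈ s | G.Adj u w} := by rw [sum_boole]
    _ ≤ d := by exact_mod_cast hs u hu

theorem card_add_ncard_le_card_of_lt_eigenvalues [DecidableEq V] {G : SimpleGraph V}
    [DecidableRel G.Adj] {d : ℕ} {A : Matrix V V ℝ} (hA : A.IsHermitian) (hbd : ∀ u v, |A u v| ≤ 1)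
    (hz : ∀ u v, ¬ G.Adj u v → A u v = 0) {s : Finset V} (hs : ∀ v ∈ s, #{w ∈ s | G.Adj v w} ≤ d)
    {ι : Type*} [Fintype ι] (b : OrthonormalBasis ι ℝ (EuclideanSpace ℝ V)) {μ : ι → ℝ}
    (hb : ∀ i, toEuclideanLin A (b i) = μ i • b i) {T : Set ι} (hT : ∀ i ∈ T, (d : ℝ) < μ i) :
    #s + T.ncard ≤ Fintype.card V := by
  let e := EuclideanSpace.basisFun V ℝ
  have hdisj : Disjoint (span ℝ (e '' s)) (span ℝ (b '' T)) := by
    refine Submodule.disjoint_def.mpr fun x hxs hxT => by_contra fun hx0 => ?_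
    have hsupp : ∀ v ∉ s, x v = 0 := fun v hv => by
      simpa [e, EuclideanSpace.inner_single_left] using e.inner_eq_zero_of_mem_span_image hxs hv
    have hlt := b.mul_norm_sq_lt_inner_apply_self (isSymmetric_toEuclideanLin_iff.mpr hA) hb hT
      hxT hx0
    have hle := abs_inner_toEuclideanLin_self_le_of_induced_degree_le hA hbd hz hs hsupp
    linarith [le_abs_self ⟪x, toEuclideanLin A x⟫_ℝ]
  have := Submodule.finrank_add_finrank_le_of_disjoint hdisj
  rwa [e.orthonormal.linearIndependent.finrank_span_image, Set.ncard_coe_finset,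
    b.orthonormal.linearIndependent.finrank_span_image, finrank_euclideanSpace] at this

end

open ImproperPaper in

theorem stmt_11 {V : Type*} [Fintype V] [DecidableEq V] (G : SimpleGraph V) (d : ℕ)
    (A : Matrix V V ℝ) (hA : A.IsHermitian)
    (hbd : ∀ u v : V, |A u v| ≤ 1) (hz : ∀ u v : V, ¬ G.Adj u v → A u v = 0) :
    maxImproperIndep G d ≤
      min (Fintype.card V - ({i : V | (d : ℝ) < hA.eigenvalues i} : Set V).ncard)
        (Fintype.card V - ({i : V | hA.eigenvalues i < -(d : ℝ)} : Set V).ncard) := by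
  classical
  have hb (i : V) : toEuclideanLin A (hA.eigenvectorBasis i) =
      hA.eigenvalues i • hA.eigenvectorBasis i :=
    congrArg (WithLp.toLp 2) (hA.mulVec_eigenvectorBasis i)
  refine csSup_le ⟨0, ∅, by simp⟩ ?_
  rintro _ ⟨s, rfl, hs⟩
  obtain ⟨s, rfl⟩ := s.toFinite.exists_finset_coe
  replace hs : ∀ v ∈ s, #{w ∈ s | G.Adj v w} ≤ d := fun v hv => by
    simpa [← Set.ncard_coe_finset] using hs v hv
  rw [Set.ncard_coe_finset]
  refine le_min ?_ ?_
  · have := card_add_ncard_le_card_of_lt_eigenvalues hA hbd hz hs _ hb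
      (T := {i | (d : ℝ) < hA.eigenvalues i}) fun _ h => h
    omega
  · have hb_neg (i : V) : toEuclideanLin (-A) (hA.eigenvectorBasis i) =
        -hA.eigenvalues i • hA.eigenvectorBasis i := by
      rw [map_neg, LinearMap.neg_apply, hb, neg_smul]
    have := card_add_ncard_le_card_of_lt_eigenvalues hA.neg (by simpa using hbd)
      (by simpa using hz) hs _ hb_neg (T := {i | hA.eigenvalues i < -(d : ℝ)})
      fun _ h => lt_neg_of_lt_neg h
    omega
end
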